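/- With w as in the noiseless attention average of unit cluster centers, choosing λ = (log d + log K)/Δ yields ⟨μ_k, w⟩/‖w‖ ≥ 1 − C·(K−1)K^{-1}d^{-1} ≥ 1 − C/d for an absolute constant C, provided (K−1)exp(−λΔ) ≤ 1/2. -/

import Mathlib

/-!
The margin makes every softmax weight other than that of `μ k` at most `exp (-λΔ) = 1/(Kd)`,
so the attention average `w` is a convex combination within `2(K-1)/(Kd)` of `μ k`.
A vector within `ε` of a unit vector `u` has cosine at least `1 - 2ε` with it, which gives `C = 4`.
-/

open Real Finset
open scoped RealInnerProductSpace

section InnerProduct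

variable {F : Type*} [NormedAddCommGroup F] [InnerProductSpace ℝ F]

theorem one_sub_two_mul_norm_sub_le_inner_div_norm {u w : F} (hu : ‖u‖ = 1) :
    1 - 2 * ‖w - u‖ ≤ ⟪u, w⟫ / ‖w‖ := by
  rcases eq_or_ne w 0 with rfl | hw
  · simp [hu]
  have hinner : 1 - ‖w - u‖ ≤ ⟪u, w⟫ := by
    have h := (abs_le.mp (abs_real_inner_le_norm u (w - u))).1
    rw [inner_sub_right, real_inner_self_eq_norm_sq, hu] at h
    linarith
  have hnorm : ‖w‖ ≤ 1 + ‖w - u‖ := hu ▸ norm_le_norm_add_norm_sub' w u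
  have hneg : -‖w‖ ≤ ⟪u, w⟫ := by
    have := (abs_le.mp (abs_real_inner_le_norm u w)).1
    rwa [hu, one_mul] at this
  rw [le_div_iff₀ (norm_pos_iff.mpr hw)]
  rcases le_total (2 * ‖w - u‖) 1 with hsmall | _
  · nlinarith [norm_nonneg (w - u)]
  rcases le_total ‖w - u‖ 1 with _ | _
  · nlinarith [norm_nonneg w]
  · nlinarith [norm_nonneg w]

end InnerProduct

section Softmax

variable {ι : Type*}

theorem exp_mul_div_sum_exp_mul_le_exp_neg {s : Finset ι} {f : ι → ℝ} {i k : ι} (hk : k ∈ s)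
    {lam Δ : ℝ} (hlam : 0 ≤ lam) (hmargin : f i + Δ ≤ f k) :
    exp (lam * f i) / ∑ j ∈ s, exp (lam * f j) ≤ exp (-(lam * Δ)) :=
  calc exp (lam * f i) / ∑ j ∈ s, exp (lam * f j)
      ≤ exp (lam * f i) / exp (lam * f k) :=
        div_le_div_of_nonneg_left (exp_pos _).le (exp_pos _)
          (single_le_sum (f := fun j => exp (lam * f j)) (fun j _ => (exp_pos _).le) hk)
    _ = exp (lam * (f i - f k)) := by rw [← exp_sub, mul_sub]
    _ ≤ exp (-(lam * Δ)) := exp_le_exp.mpr (by nlinarith)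

variable {E : Type*} [SeminormedAddCommGroup E] [NormedSpace ℝ E] [DecidableEq ι]

theorem norm_sum_smul_sub_le_sum_erase {s : Finset ι} {p : ι → ℝ} (hp0 : ∀ i ∈ s, 0 ≤ p i)
    (hp1 : ∑ i ∈ s, p i = 1) (x : ι → E) (k : ι) :
    ‖∑ i ∈ s, p i • x i - x k‖ ≤ ∑ i ∈ s.erase k, p i * ‖x i - x k‖ := by
  have hcentered : ∑ i ∈ s, p i • x i - x k = ∑ i ∈ s, p i • (x i - x k) := by
    simp only [smul_sub, sum_sub_distrib, ← sum_smul, hp1, one_smul]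
  calc ‖∑ i ∈ s, p i • x i - x k‖ ≤ ∑ i ∈ s, ‖p i • (x i - x k)‖ :=
        hcentered ▸ norm_sum_le _ _
    _ = ∑ i ∈ s, p i * ‖x i - x k‖ :=
        sum_congr rfl fun i hi => by rw [norm_smul, norm_of_nonneg (hp0 i hi)]
    _ = ∑ i ∈ s.erase k, p i * ‖x i - x k‖ := by
        rw [sum_erase _ (by rw [sub_self, norm_zero, mul_zero])]

variable [Fintype ι]

theorem norm_softmax_average_sub_le (f : ι → ℝ) (x : ι → E) {k : ι} {lam Δ D : ℝ}
    (hlam : 0 ≤ lam) (hmargin : ∀ i, i ≠ k → f i + Δ ≤ f k) (hD : ∀ i, ‖x i - x k‖ ≤ D) :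
    ‖(∑ i, exp (lam * f i))⁻¹ • ∑ i, exp (lam * f i) • x i - x k‖ ≤
      (Fintype.card ι - 1) * exp (-(lam * Δ)) * D := by
  set Z := ∑ i, exp (lam * f i)
  have hZ : 0 < Z := sum_pos (fun i _ => exp_pos _) ⟨k, mem_univ k⟩
  have hweights : (Z⁻¹ • ∑ i, exp (lam * f i) • x i) =
      ∑ i, (exp (lam * f i) / Z) • x i := by
    simp only [smul_sum, smul_smul, div_eq_inv_mul]
  have hp1 : ∑ i, exp (lam * f i) / Z = 1 := by rw [← sum_div, div_self hZ.ne']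
  calc ‖Z⁻¹ • ∑ i, exp (lam * f i) • x i - x k‖
      ≤ ∑ i ∈ univ.erase k, exp (lam * f i) / Z * ‖x i - x k‖ := by
        rw [hweights]
        exact norm_sum_smul_sub_le_sum_erase (fun i _ => by positivity) hp1 x k
    _ ≤ ∑ i ∈ univ.erase k, exp (-(lam * Δ)) * D := by
        refine sum_le_sum fun i hi => mul_le_mul ?_ (hD i) (norm_nonneg _) (exp_pos _).le
        exact exp_mul_div_sum_exp_mul_le_exp_neg (mem_univ k) hlam
          (hmargin i (ne_of_mem_erase hi))
    _ = (Fintype.card ι - 1) * exp (-(lam * Δ)) * D := by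
        rw [sum_const, card_erase_of_mem (mem_univ k), card_univ, nsmul_eq_mul,
          Nat.cast_pred (Fintype.card_pos_iff.mpr ⟨k⟩), mul_assoc]

end Softmax

/-- With temperature `λ = (log d + log K)/Δ`, the noiseless attention average `w` of the
cluster centers satisfies `⟨μ_k, w⟩/‖w‖ ≥ 1 − C(K−1)/(Kd) ≥ 1 − C/d` for an absolute
constant `C > 0`, provided `(K−1)exp(−λΔ) ≤ 1/2`. -/
theorem attention_average_cosine_bound :
    ∃ C : ℝ, 0 < C ∧
      ∀ (d K : ℕ), 1 ≤ d → 1 ≤ K →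
      ∀ (Δ lam : ℝ), 0 < Δ → lam = (Real.log d + Real.log K) / Δ →
      ∀ (μ : Fin K → EuclideanSpace ℝ (Fin d)), (∀ i, ‖μ i‖ = 1) →
      ∀ (v : EuclideanSpace ℝ (Fin d)), ‖v‖ = 1 →
      ∀ (k : Fin K), (∀ i, i ≠ k → ⟪v, μ i⟫ + Δ ≤ ⟪v, μ k⟫) →
      ((K : ℝ) - 1) * Real.exp (-(lam * Δ)) ≤ 1 / 2 →
      (⟪μ k, (∑ i, Real.exp (lam * ⟪v, μ i⟫))⁻¹ •
            (∑ i, Real.exp (lam * ⟪v, μ i⟫) • μ i)⟫ /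
          ‖(∑ i, Real.exp (lam * ⟪v, μ i⟫))⁻¹ •
            (∑ i, Real.exp (lam * ⟪v, μ i⟫) • μ i)‖ ≥
        1 - C * ((K : ℝ) - 1) / (K * d)) ∧
      1 - C * ((K : ℝ) - 1) / (K * d) ≥ 1 - C / d := by
  refine ⟨4, by norm_num, fun d K hd hK Δ lam hΔ hlam μ hμ v _ k hmargin _ => ?_⟩
  have hd' : (1 : ℝ) ≤ d := Nat.one_le_cast.mpr hd
  have hK' : (1 : ℝ) ≤ K := Nat.one_le_cast.mpr hK
  have hlam_nonneg : 0 ≤ lam :=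
    hlam ▸ div_nonneg (add_nonneg (log_nonneg hd') (log_nonneg hK')) hΔ.le
  have hexp : exp (-(lam * Δ)) = ((K : ℝ) * d)⁻¹ := by
    rw [hlam, div_mul_cancel₀ _ hΔ.ne', ← log_mul (by positivity) (by positivity), exp_neg,
      exp_log (by positivity), mul_comm]
  have hclose := norm_softmax_average_sub_le (fun i => ⟪v, μ i⟫) μ hlam_nonneg hmargin
    (D := 2) fun i => (norm_sub_le _ _).trans_eq (by rw [hμ i, hμ k]; norm_num)
  rw [Fintype.card_fin, hexp] at hclose
  refine ⟨(one_sub_two_mul_norm_sub_le_inner_div_norm (hμ k)).trans' ?_, ?_⟩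
  · rw [show 4 * ((K : ℝ) - 1) / (K * d) = 2 * ((K - 1) * ((K : ℝ) * d)⁻¹ * 2) by ring]
    linarith
  · rw [ge_iff_le, sub_le_sub_iff_left, div_le_div_iff₀ (by positivity) (by positivity)]
    nlinarith
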